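/- arXiv:1505.04196 — 3 statements merged into one kernel-verified Lean document; each statement's English description precedes it below -/
import Mathlib

section
/- In the ring of symmetric functions, for n ≥ 4 one has the identity s_{(3,1^{n−3})} − s_{(2,2,1^{n−4})} = e_n + p_2·e_{n−2}, where s denotes Schur functions, e_k elementary symmetric functions, and p_2 the second power sum. -/
open scoped BigOperators

abbrev SymFn : Type := MvPolynomial ℕ ℚ

noncomputable def psum (n : ℕ) : SymFn := MvPolynomial.X n

noncomputable def hsym : ℕ → SymFn
  | 0 => 1
  | (n+1) => (((n : ℚ)+1)⁻¹) • ∑ i ∈ Finset.range (n+1), psum (i+1) * hsym (n-i)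
  termination_by n => n
  decreasing_by omega

noncomputable def esym : ℕ → SymFn
  | 0 => 1
  | (n+1) => (((n : ℚ)+1)⁻¹) •
      ∑ i ∈ Finset.range (n+1), ((-1 : SymFn))^i * psum (i+1) * esym (n-i)
  termination_by n => n
  decreasing_by omega

noncomputable def hInt (k : ℤ) : SymFn := if k < 0 then 0 else hsym k.toNat

noncomputable def schur (l : List ℕ) : SymFn :=
  (Matrix.of fun i j : Fin l.length =>
    hInt (((l.get i : ℕ) : ℤ) - ((i : ℕ) : ℤ) + ((j : ℕ) : ℤ))).det

def IsPartition (l : List ℕ) : Prop :=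
  l.Pairwise (· ≥ ·) ∧ ∀ x ∈ l, 0 < x

def SchurBounded (N : ℕ) (f : SymFn) : Prop :=
  ∃ c : List ℕ →₀ ℚ,
    (∀ l ∈ c.support, IsPartition l ∧ l.headI ≤ N) ∧
    f = c.sum fun l a => a • schur l

noncomputable def hall (f g : SymFn) : ℚ :=
  ∑ s ∈ f.support, f.coeff s * g.coeff s *
    (s.prod fun i k => (i : ℚ)^k * (k.factorial : ℚ))

noncomputable def pleth (f g : SymFn) : SymFn :=
  MvPolynomial.aeval (fun n => MvPolynomial.aeval (fun m => psum (n * m)) g) f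

def partsList {n : ℕ} (π : Nat.Partition n) : List ℕ := (π.parts.sort (· ≤ ·)).reverse

noncomputable def pProd {n : ℕ} (π : Nat.Partition n) : SymFn := (π.parts.map psum).prod

noncomputable def zPart {n : ℕ} (π : Nat.Partition n) : ℚ :=
  (π.parts.map (fun a => (a : ℚ))).prod *
    ∏ j ∈ π.parts.toFinset, ((π.parts.count j).factorial : ℚ)


open Finset

lemma hsym_zero : hsym 0 = 1 := by rw [hsym]
lemma esym_zero : esym 0 = 1 := by rw [esym]

lemma hsym_smul (n : ℕ) : ((n:ℚ)+1) • hsym (n+1)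
    = ∑ i ∈ Finset.range (n+1), psum (i+1) * hsym (n-i) := by
  rw [hsym, smul_smul, mul_inv_cancel₀ (by positivity), one_smul]

lemma esym_smul (n : ℕ) : ((n:ℚ)+1) • esym (n+1)
    = ∑ i ∈ Finset.range (n+1), ((-1 : SymFn))^i * psum (i+1) * esym (n-i) := by
  rw [esym, smul_smul, mul_inv_cancel₀ (by positivity), one_smul]

lemma hsym_one : hsym 1 = psum 1 := by
  have := hsym_smul 0
  simpa [hsym_zero] using this

lemma hInt_coe (k : ℕ) : hInt (k : ℤ) = hsym k := by simp [hInt]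
lemma hInt_neg {m : ℤ} (h : m < 0) : hInt m = 0 := by simp [hInt, h]

lemma schur_nil : schur ([] : List ℕ) = 1 := by
  simp [schur, Matrix.det_isEmpty]

lemma schur_single (a : ℕ) : schur [a] = hsym a := by
  simp [schur, Matrix.det_fin_one, hInt_coe]

lemma schur_eq_det (l : List ℕ) (N : ℕ) (h : l.length = N) (f : ℕ → ℕ)
    (hf : ∀ i : Fin l.length, l.get i = f i.val) :
    schur l = (Matrix.of fun i j : Fin N =>
      hInt (((f i : ℕ) : ℤ) - ((i : ℕ) : ℤ) + ((j : ℕ) : ℤ))).det := by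
  rw [schur, ← Matrix.det_reindex_self (finCongr h)]
  congr 1
  refine Matrix.ext fun i j => ?_
  rw [Matrix.reindex_apply]
  simp only [Matrix.submatrix_apply, Matrix.of_apply]
  rw [hf]
  simp

lemma get_cons_repl (a b k : ℕ) (i : Fin (a :: List.replicate k b).length) :
    (a :: List.replicate k b).get i = if i.val = 0 then a else b := by
  match i with
  | ⟨0, _⟩ => rfl
  | ⟨j+1, hj⟩ => simp [List.getElem_replicate]

lemma get_repl (b k : ℕ) (i : Fin (List.replicate k b).length) :
    (List.replicate k b).get i = b := by simp [List.getElem_replicate]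

lemma get_22 (k : ℕ) (i : Fin (2 :: 2 :: List.replicate k 1).length) :
    (2 :: 2 :: List.replicate k 1).get i
      = if i.val = 0 then 2 else if i.val = 1 then 2 else 1 := by
  match i with
  | ⟨0, _⟩ => rfl
  | ⟨1, _⟩ => rfl
  | ⟨j+2, hj⟩ => simp [List.getElem_replicate]

lemma rec_hook (a k : ℕ) :
    schur (a :: List.replicate (k+1) 1)
      = hsym a * schur (List.replicate (k+1) 1) - schur ((a+1) :: List.replicate k 1) := by
  have hL := schur_eq_det (a :: List.replicate (k+1) 1) (k+1+1) (by simp)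
      (fun m => if m = 0 then a else 1) (fun i => get_cons_repl a 1 (k+1) i)
  set A : Matrix (Fin (k+1+1)) (Fin (k+1+1)) SymFn :=
    (Matrix.of fun i j : Fin (k+1+1) =>
      hInt ((((if (i:ℕ) = 0 then a else 1 : ℕ)) : ℤ) - ((i:ℕ):ℤ) + ((j:ℕ):ℤ))) with hA
  have e0 : schur (List.replicate (k+1) 1)
      = (Matrix.of fun i j : Fin (k+1) => hInt ((1:ℤ) - ((i:ℕ):ℤ) + ((j:ℕ):ℤ))).det := by
    have := schur_eq_det (List.replicate (k+1) 1) (k+1) (by simp)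
      (fun _ => 1) (fun i => get_repl 1 (k+1) i)
    simpa using this
  have e1 : schur ((a+1) :: List.replicate k 1)
      = (Matrix.of fun i j : Fin (k+1) =>
          hInt ((((if (i:ℕ) = 0 then a+1 else 1 : ℕ)) : ℤ) - ((i:ℕ):ℤ) + ((j:ℕ):ℤ))).det := by
    have := schur_eq_det ((a+1) :: List.replicate k 1) (k+1) (by simp)
      (fun m => if m = 0 then a+1 else 1) (fun i => get_cons_repl (a+1) 1 k i)
    simpa using this
  have m0 : A.submatrix (0 : Fin (k+1+1)).succAbove Fin.succ
      = (Matrix.of fun i j : Fin (k+1) => hInt ((1:ℤ) - ((i:ℕ):ℤ) + ((j:ℕ):ℤ))) := by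
    refine Matrix.ext fun i j => ?_
    simp only [hA, Matrix.submatrix_apply, Matrix.of_apply, Fin.succAbove_zero, Fin.val_succ]
    norm_num
    congr 1
    push_cast
    ring
  have m1 : A.submatrix ((0 : Fin (k+1)).succ).succAbove Fin.succ
      = (Matrix.of fun i j : Fin (k+1) =>
          hInt ((((if (i:ℕ) = 0 then a+1 else 1 : ℕ)) : ℤ) - ((i:ℕ):ℤ) + ((j:ℕ):ℤ))) := by
    refine Matrix.ext fun i j => ?_
    rcases Fin.eq_zero_or_eq_succ i with rfl | ⟨i', rfl⟩
    · have hs : ((0 : Fin (k+1)).succ).succAbove 0 = 0 := by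
        rw [Fin.succAbove_of_castSucc_lt]
        · rfl
        · simp [Fin.lt_def]
      simp only [hA, Matrix.submatrix_apply, Matrix.of_apply, hs, Fin.val_succ, Fin.val_zero]
      norm_num
      congr 1
      push_cast
      ring
    · have hs : ((0 : Fin (k+1)).succ).succAbove i'.succ = i'.succ.succ := by
        rw [Fin.succAbove_of_le_castSucc]
        simp [Fin.le_def]
      simp only [hA, Matrix.submatrix_apply, Matrix.of_apply, hs, Fin.val_succ]
      norm_num
      congr 1
      push_cast
      ring
  rw [hL, Matrix.det_succ_column_zero, Fin.sum_univ_succ, Fin.sum_univ_succ]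
  have tz : ∀ i : Fin k,
      (-1 : SymFn) ^ ((i.succ.succ : Fin (k+1+1)) : ℕ) * A i.succ.succ 0 *
        (A.submatrix i.succ.succ.succAbove Fin.succ).det = 0 := by
    intro i
    have : A i.succ.succ 0 = 0 := by
      simp only [hA, Matrix.of_apply, Fin.val_succ, Fin.val_zero]
      rw [if_neg (by omega)]
      apply hInt_neg
      push_cast
      omega
    rw [this]; ring
  rw [Finset.sum_congr rfl (fun i _ => tz i), Finset.sum_const_zero, add_zero]
  have a00 : A 0 0 = hsym a := by
    simp only [hA, Matrix.of_apply, Fin.val_zero]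
    norm_num
    rw [← hInt_coe]
  have a10 : A (0 : Fin (k+1)).succ 0 = 1 := by
    simp only [hA, Matrix.of_apply, Fin.val_succ, Fin.val_zero]
    norm_num
    rw [show (0:ℤ) = ((0:ℕ):ℤ) by norm_num, hInt_coe, hsym_zero]
  rw [a00, a10, m0, m1, ← e0, ← e1]
  simp
  ring

lemma rec22 (k : ℕ) :
    schur (2 :: 2 :: List.replicate k 1)
      = hsym 2 * schur (2 :: List.replicate k 1) - hsym 1 * schur (3 :: List.replicate k 1) := by
  have hL := schur_eq_det (2 :: 2 :: List.replicate k 1) (k+1+1) (by simp)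
      (fun m => if m = 0 then 2 else if m = 1 then 2 else 1) (fun i => get_22 k i)
  set A : Matrix (Fin (k+1+1)) (Fin (k+1+1)) SymFn :=
    (Matrix.of fun i j : Fin (k+1+1) =>
      hInt ((((if (i:ℕ) = 0 then 2 else if (i:ℕ) = 1 then 2 else 1 : ℕ)) : ℤ)
        - ((i:ℕ):ℤ) + ((j:ℕ):ℤ))) with hA
  have e0 : schur (2 :: List.replicate k 1)
      = (Matrix.of fun i j : Fin (k+1) =>
          hInt ((((if (i:ℕ) = 0 then 2 else 1 : ℕ)) : ℤ) - ((i:ℕ):ℤ) + ((j:ℕ):ℤ))).det := by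
    have := schur_eq_det (2 :: List.replicate k 1) (k+1) (by simp)
      (fun m => if m = 0 then 2 else 1) (fun i => get_cons_repl 2 1 k i)
    simpa using this
  have e1 : schur (3 :: List.replicate k 1)
      = (Matrix.of fun i j : Fin (k+1) =>
          hInt ((((if (i:ℕ) = 0 then 3 else 1 : ℕ)) : ℤ) - ((i:ℕ):ℤ) + ((j:ℕ):ℤ))).det := by
    have := schur_eq_det (3 :: List.replicate k 1) (k+1) (by simp)
      (fun m => if m = 0 then 3 else 1) (fun i => get_cons_repl 3 1 k i)
    simpa using this
  have m0 : A.submatrix (0 : Fin (k+1+1)).succAbove Fin.succ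
      = (Matrix.of fun i j : Fin (k+1) =>
          hInt ((((if (i:ℕ) = 0 then 2 else 1 : ℕ)) : ℤ) - ((i:ℕ):ℤ) + ((j:ℕ):ℤ))) := by
    refine Matrix.ext fun i j => ?_
    rcases Fin.eq_zero_or_eq_succ i with rfl | ⟨i', rfl⟩
    · simp only [hA, Matrix.submatrix_apply, Matrix.of_apply, Fin.succAbove_zero, Fin.val_succ,
        Fin.val_zero]
      norm_num
      congr 1
      ring
    · simp only [hA, Matrix.submatrix_apply, Matrix.of_apply, Fin.succAbove_zero, Fin.val_succ]
      norm_num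
      congr 1
      push_cast
      ring
  have m1 : A.submatrix ((0 : Fin (k+1)).succ).succAbove Fin.succ
      = (Matrix.of fun i j : Fin (k+1) =>
          hInt ((((if (i:ℕ) = 0 then 3 else 1 : ℕ)) : ℤ) - ((i:ℕ):ℤ) + ((j:ℕ):ℤ))) := by
    refine Matrix.ext fun i j => ?_
    rcases Fin.eq_zero_or_eq_succ i with rfl | ⟨i', rfl⟩
    · have hs : ((0 : Fin (k+1)).succ).succAbove 0 = 0 := by
        rw [Fin.succAbove_of_castSucc_lt]
        · rfl
        · simp [Fin.lt_def]
      simp only [hA, Matrix.submatrix_apply, Matrix.of_apply, hs, Fin.val_succ, Fin.val_zero]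
      norm_num
      congr 1
      ring
    · have hs : ((0 : Fin (k+1)).succ).succAbove i'.succ = i'.succ.succ := by
        rw [Fin.succAbove_of_le_castSucc]
        simp [Fin.le_def]
      simp only [hA, Matrix.submatrix_apply, Matrix.of_apply, hs, Fin.val_succ]
      norm_num
      congr 1
      push_cast
      ring
  rw [hL, Matrix.det_succ_column_zero, Fin.sum_univ_succ, Fin.sum_univ_succ]
  have tz : ∀ i : Fin k,
      (-1 : SymFn) ^ ((i.succ.succ : Fin (k+1+1)) : ℕ) * A i.succ.succ 0 *
        (A.submatrix i.succ.succ.succAbove Fin.succ).det = 0 := by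
    intro i
    have : A i.succ.succ 0 = 0 := by
      simp only [hA, Matrix.of_apply, Fin.val_succ, Fin.val_zero]
      rw [if_neg (by omega), if_neg (by omega)]
      apply hInt_neg
      push_cast
      omega
    rw [this]; ring
  rw [Finset.sum_congr rfl (fun i _ => tz i), Finset.sum_const_zero, add_zero]
  have a00 : A 0 0 = hsym 2 := by
    simp only [hA, Matrix.of_apply, Fin.val_zero]
    norm_num
    rw [show (2:ℤ) = ((2:ℕ):ℤ) by norm_num, hInt_coe]
  have a10 : A (0 : Fin (k+1)).succ 0 = hsym 1 := by
    simp only [hA, Matrix.of_apply, Fin.val_succ, Fin.val_zero]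
    norm_num
    rw [show (1:ℤ) = ((1:ℕ):ℤ) by norm_num, hInt_coe]
  rw [a00, a10, m0, m1, ← e0, ← e1]
  simp
  ring

lemma newton (m : ℕ) :
    ∑ i ∈ Finset.range (m+2), (-1:SymFn)^i * hsym i * esym (m+1-i) = 0 := by
  have key : ((m+1:ℕ):ℚ) • (∑ i ∈ Finset.range (m+2), (-1:SymFn)^i * hsym i * esym (m+1-i))
      = 0 := by
    rw [Finset.smul_sum]
    have step : ∀ i ∈ Finset.range (m+2),
        ((m+1:ℕ):ℚ) • ((-1:SymFn)^i * hsym i * esym (m+1-i))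
          = (-1:SymFn)^i * (((i:ℕ):ℚ) • hsym i) * esym (m+1-i)
            + (-1:SymFn)^i * hsym i * (((m+1-i:ℕ):ℚ) • esym (m+1-i)) := by
      intro i hi
      simp only [Finset.mem_range] at hi
      have h1 : ((m+1:ℕ):ℚ) = ((i:ℕ):ℚ) + ((m+1-i:ℕ):ℚ) := by
        rw [Nat.cast_sub (by omega)]; push_cast; ring
      rw [h1, add_smul]
      congr 1
      · rw [mul_smul_comm, smul_mul_assoc]
      · rw [mul_smul_comm ((m+1-i:ℕ):ℚ)]
    rw [Finset.sum_congr rfl step, Finset.sum_add_distrib]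
    have hA : ∑ i ∈ Finset.range (m+2), (-1:SymFn)^i * (((i:ℕ):ℚ) • hsym i) * esym (m+1-i)
        = ∑ i ∈ Finset.range (m+1), ∑ j ∈ Finset.range (i+1),
            (-1:SymFn)^(i+1) * (psum (j+1) * hsym (i-j)) * esym (m-i) := by
      rw [Finset.sum_range_succ']
      simp only [Nat.cast_zero, zero_smul, mul_zero, zero_mul, mul_one, add_zero]
      refine Finset.sum_congr rfl fun i hi => ?_
      have hc : ((i+1:ℕ):ℚ) = ((i:ℕ):ℚ) + 1 := by push_cast; ring
      rw [hc, hsym_smul i, Finset.mul_sum, Finset.sum_mul]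
      refine Finset.sum_congr rfl fun j hj => ?_
      have : m + 1 - (i+1) = m - i := by omega
      rw [this]
    have hB : ∑ i ∈ Finset.range (m+2), (-1:SymFn)^i * hsym i * (((m+1-i:ℕ):ℚ) • esym (m+1-i))
        = ∑ i ∈ Finset.range (m+1), ∑ j ∈ Finset.range (m-i+1),
            (-1:SymFn)^i * hsym i * ((-1:SymFn)^j * psum (j+1) * esym (m-i-j)) := by
      rw [Finset.sum_range_succ]
      simp only [Nat.sub_self, Nat.cast_zero, zero_smul, smul_zero, mul_zero, add_zero]
      refine Finset.sum_congr rfl fun i hi => ?_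
      simp only [Finset.mem_range] at hi
      have h2 : m + 1 - i = (m - i) + 1 := by omega
      have hc : ((m-i+1:ℕ):ℚ) = (((m-i):ℕ):ℚ) + 1 := by push_cast; ring
      rw [h2, hc, esym_smul (m-i), Finset.mul_sum]
    rw [hA, hB, Finset.sum_sigma', Finset.sum_sigma']
    have cancel : ∑ x ∈ (Finset.range (m+1)).sigma (fun i => Finset.range (i+1)),
          (-1:SymFn)^(x.1+1) * (psum (x.2+1) * hsym (x.1 - x.2)) * esym (m - x.1)
        = - ∑ x ∈ (Finset.range (m+1)).sigma (fun i => Finset.range (m-i+1)),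
            (-1:SymFn)^x.1 * hsym x.1 * ((-1:SymFn)^x.2 * psum (x.2+1) * esym (m - x.1 - x.2)) := by
      rw [← Finset.sum_neg_distrib]
      refine Finset.sum_nbij' (fun x => ⟨x.1 - x.2, x.2⟩) (fun x => ⟨x.1 + x.2, x.2⟩)
        ?_ ?_ ?_ ?_ ?_
      · rintro ⟨i, j⟩ h
        simp only [Finset.mem_sigma, Finset.mem_range] at h ⊢
        omega
      · rintro ⟨u, j⟩ h
        simp only [Finset.mem_sigma, Finset.mem_range] at h ⊢
        omega
      · rintro ⟨i, j⟩ h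
        simp only [Finset.mem_sigma, Finset.mem_range] at h
        obtain ⟨h1, h2⟩ := h
        have hij : i - j + j = i := by omega
        simp [hij]
      · rintro ⟨u, j⟩ h
        simp only [Finset.mem_sigma, Finset.mem_range] at h
        simp [Nat.add_sub_cancel]
      · rintro ⟨i, j⟩ h
        simp only [Finset.mem_sigma, Finset.mem_range] at h
        have hji : j ≤ i := by omega
        have e1 : m - (i - j) - j = m - i := by omega
        have e2 : (-1:SymFn)^(i-j) * (-1:SymFn)^j = (-1:SymFn)^i := by
          rw [← pow_add]
          congr 1
          omega
        simp only [e1]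
        rw [pow_succ]
        calc (-1:SymFn)^i * (-1) * (psum (j+1) * hsym (i-j)) * esym (m-i)
            = -(((-1:SymFn)^(i-j) * (-1:SymFn)^j) * (psum (j+1) * hsym (i-j)) * esym (m-i)) := by
              rw [e2]; ring
          _ = -((-1:SymFn)^(i-j) * hsym (i-j) * ((-1:SymFn)^j * psum (j+1) * esym (m-i))) := by
              ring
    rw [cancel]
    ring
  have hne : ((m+1:ℕ):ℚ) ≠ 0 := by positivity
  have h2 : (((m+1:ℕ):ℚ))⁻¹ • (((m+1:ℕ):ℚ)
      • (∑ i ∈ Finset.range (m+2), (-1:SymFn)^i * hsym i * esym (m+1-i))) = 0 := by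
    rw [key, smul_zero]
  rwa [smul_smul, inv_mul_cancel₀ hne, one_smul] at h2

lemma hookE (k : ℕ) : ∀ a : ℕ, schur (a :: List.replicate k 1)
    = ∑ i ∈ Finset.range (k+1), (-1:SymFn)^i * hsym (a+i) * schur (List.replicate (k-i) 1) := by
  induction k with
  | zero => intro a; simp [schur_single, schur_nil]
  | succ k ih =>
    intro a
    rw [rec_hook a k, ih (a+1)]
    conv_rhs => rw [Finset.sum_range_succ']
    have h3 : ∀ i ∈ Finset.range (k+1),
        (-1:SymFn)^(i+1) * hsym (a+(i+1)) * schur (List.replicate (k+1-(i+1)) 1)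
          = -((-1:SymFn)^i * hsym (a+1+i) * schur (List.replicate (k-i) 1)) := by
      intro i hi
      have e1 : k+1-(i+1) = k-i := by omega
      have e2 : a+(i+1) = a+1+i := by omega
      rw [e1, e2, pow_succ]
      ring
    rw [Finset.sum_congr rfl h3, Finset.sum_neg_distrib]
    simp only [pow_zero, one_mul, Nat.add_zero, Nat.sub_zero]
    ring

lemma E_eq : ∀ k, schur (List.replicate k 1) = esym k := by
  intro k
  induction k using Nat.strong_induction_on with
  | _ k ih =>
    match k with
    | 0 => rw [esym_zero]; exact schur_nil
    | (k+1) =>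
      have h1 : List.replicate (k+1) 1 = 1 :: List.replicate k 1 := rfl
      rw [h1, hookE k 1]
      have h2 : ∀ i ∈ Finset.range (k+1),
          (-1:SymFn)^i * hsym (1+i) * schur (List.replicate (k-i) 1)
            = (-1:SymFn)^i * hsym (1+i) * esym (k-i) := by
        intro i hi; rw [ih (k-i) (by omega)]
      rw [Finset.sum_congr rfl h2]
      have hN := newton k
      rw [Finset.sum_range_succ'] at hN
      simp only [pow_zero, one_mul, hsym_zero, Nat.sub_zero] at hN
      have h3 : ∀ i ∈ Finset.range (k+1),
          (-1:SymFn)^(i+1) * hsym (i+1) * esym (k+1-(i+1))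
            = -((-1:SymFn)^i * hsym (1+i) * esym (k-i)) := by
        intro i hi
        have e1 : k+1-(i+1) = k-i := by omega
        rw [e1, show hsym (i+1) = hsym (1+i) by rw [Nat.add_comm], pow_succ]
        ring
      rw [Finset.sum_congr rfl h3, Finset.sum_neg_distrib] at hN
      linear_combination -hN

noncomputable def hk (a k : ℕ) : SymFn :=
  ∑ i ∈ Finset.range (k+1), (-1:SymFn)^i * hsym (a+i) * esym (k-i)

lemma schur_hook (a k : ℕ) : schur (a :: List.replicate k 1) = hk a k := by
  rw [hookE k a]
  exact Finset.sum_congr rfl fun i hi => by rw [E_eq]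

lemma hk2 (k : ℕ) : hk 2 k = hsym 1 * esym (k+1) - esym (k+2) := by
  have hN := newton (k+1)
  rw [Finset.sum_range_succ'] at hN
  rw [Finset.sum_range_succ'] at hN
  simp only [pow_zero, one_mul, hsym_zero, Nat.sub_zero] at hN
  have h3 : ∀ i ∈ Finset.range (k+1),
      (-1:SymFn)^(i+1+1) * hsym (i+1+1) * esym (k+1+1-(i+1+1))
        = (-1:SymFn)^i * hsym (2+i) * esym (k-i) := by
    intro i hi
    have e1 : k+1+1-(i+1+1) = k-i := by omega
    rw [e1, show hsym (i+1+1) = hsym (2+i) by congr 1; omega, pow_succ, pow_succ]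
    ring
  rw [Finset.sum_congr rfl h3] at hN
  have : hk 2 k = ∑ i ∈ Finset.range (k+1), (-1:SymFn)^i * hsym (2+i) * esym (k-i) := rfl
  rw [this]
  simp only [zero_add, pow_one, show k+1+1-1 = k+1 by omega, show k+1+1 = k+2 by omega] at hN
  linear_combination hN

lemma hk3 (k : ℕ) : hk 3 k = esym (k+3) - hsym 1 * esym (k+2) + hsym 2 * esym (k+1) := by
  have hN := newton (k+2)
  rw [Finset.sum_range_succ'] at hN
  rw [Finset.sum_range_succ'] at hN
  rw [Finset.sum_range_succ'] at hN
  simp only [pow_zero, one_mul, hsym_zero, Nat.sub_zero] at hN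
  have h3 : ∀ i ∈ Finset.range (k+1),
      (-1:SymFn)^(i+1+1+1) * hsym (i+1+1+1) * esym (k+2+1-(i+1+1+1))
        = -((-1:SymFn)^i * hsym (3+i) * esym (k-i)) := by
    intro i hi
    have e1 : k+2+1-(i+1+1+1) = k-i := by omega
    rw [e1, show hsym (i+1+1+1) = hsym (3+i) by congr 1; omega, pow_succ, pow_succ, pow_succ]
    ring
  rw [Finset.sum_congr rfl h3, Finset.sum_neg_distrib] at hN
  have : hk 3 k = ∑ i ∈ Finset.range (k+1), (-1:SymFn)^i * hsym (3+i) * esym (k-i) := rfl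
  rw [this]
  have e2 : k+2+1-(0+1+1) = k+1 := by omega
  have e3 : k+2+1-(0+1) = k+2 := by omega
  have e4 : k+2+1 = k+3 := by omega
  rw [e2, e3, e4] at hN
  linear_combination -hN

lemma twoH2 : hsym 2 + hsym 2 = psum 1 * psum 1 + psum 2 := by
  have h := hsym_smul 1
  rw [show ((1:ℕ):ℚ)+1 = (2:ℚ) by norm_num, two_smul] at h
  rw [h]
  rw [Finset.sum_range_succ, Finset.sum_range_one]
  simp [hsym_one, hsym_zero]

/-- For `n ≥ 4`: `s_{(3,1^{n-3})} - s_{(2,2,1^{n-4})} = e_n + p_2·e_{n-2}`. -/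
theorem stmt4 (n : ℕ) (hn : 4 ≤ n) :
    schur (3 :: List.replicate (n - 3) 1) - schur (2 :: 2 :: List.replicate (n - 4) 1)
      = esym n + psum 2 * esym (n - 2) := by
  obtain ⟨k, rfl⟩ : ∃ k, n = k + 4 := ⟨n - 4, by omega⟩
  rw [show k+4-3 = k+1 by omega, show k+4-4 = k by omega, show k+4-2 = k+2 by omega]
  rw [rec22 k, schur_hook 3 (k+1), schur_hook 2 k, schur_hook 3 k, hk3, hk2, hk3]
  rw [show k+1+3 = k+4 by omega, show k+1+2 = k+3 by omega, show k+1+1 = k+2 by omega]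
  have hh2 := twoH2
  rw [hsym_one]
  linear_combination esym (k+2) * hh2
end

section
/- Let P be the polynomial character on S_n associated with the basis element binom(X, λ) = Π_j binom(x_j, m_j) for a partition λ = 1^{m₁}2^{m₂}··· (evaluated at w by setting x_j equal to the number of j-cycles of w). Then the Frobenius characteristic of this class function on S_n equals (p_λ / z_λ)·h_{n−|λ|} if n ≥ |λ|, and 0 if n < |λ|. -/
open scoped BigOperators

-- multiset versions
noncomputable def zOf (s : Multiset ℕ) : ℚ :=
  (s.map (fun a => (a : ℚ))).prod * ∏ j ∈ s.toFinset, ((s.count j).factorial : ℚ)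

noncomputable def pOf (s : Multiset ℕ) : SymFn := (s.map psum).prod

lemma zPart_eq {n : ℕ} (π : Nat.Partition n) : zPart π = zOf π.parts := rfl
lemma pProd_eq {n : ℕ} (π : Nat.Partition n) : pProd π = pOf π.parts := rfl

lemma zOf_eq (s : Multiset ℕ) {S : Finset ℕ} (hS : s.toFinset ⊆ S) :
    zOf s = ∏ j ∈ S, ((j : ℚ) ^ s.count j * ((s.count j).factorial : ℚ)) := by
  rw [zOf]
  simp only [Bind.bind, Pure.pure, Multiset.instMonad, Multiset.bind_singleton,
    Multiset.map_map, Multiset.map_id', Function.comp_def]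
  rw [Finset.prod_multiset_map_count s (fun a => (a : ℚ)), ← Finset.prod_mul_distrib]
  refine Finset.prod_subset hS ?_
  intro x _ hx
  have : s.count x = 0 := by
    rw [Multiset.count_eq_zero]
    intro hmem
    exact hx (Multiset.mem_toFinset.2 hmem)
  simp [this]

lemma zOf_pos (s : Multiset ℕ) (h : ∀ x ∈ s, 0 < x) : 0 < zOf s := by
  rw [zOf_eq s (le_refl s.toFinset)]
  refine Finset.prod_pos ?_
  intro j hj
  have hj' : 0 < j := h j (Multiset.mem_toFinset.1 hj)
  positivity

lemma pOf_add (s t : Multiset ℕ) : pOf (s + t) = pOf s * pOf t := by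
  rw [pOf, Multiset.map_add, Multiset.prod_add]; rfl

lemma pOf_cons (a : ℕ) (s : Multiset ℕ) : pOf (a ::ₘ s) = psum a * pOf s := by
  rw [pOf, Multiset.map_cons, Multiset.prod_cons]; rfl

lemma zOf_add (s t : Multiset ℕ) :
    zOf (s + t) =
      (∏ j ∈ t.toFinset, (((s.count j + t.count j).choose (t.count j) : ℚ))) *
        zOf s * zOf t := by
  classical
  set S : Finset ℕ := (s + t).toFinset with hSdef
  have hsS : s.toFinset ⊆ S := by
    intro x hx; simp only [hSdef, Multiset.mem_toFinset, Multiset.mem_add] at *; exact Or.inl hx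
  have htS : t.toFinset ⊆ S := by
    intro x hx; simp only [hSdef, Multiset.mem_toFinset, Multiset.mem_add] at *; exact Or.inr hx
  have hC : (∏ j ∈ t.toFinset, (((s.count j + t.count j).choose (t.count j) : ℚ)))
      = ∏ j ∈ S, (((s.count j + t.count j).choose (t.count j) : ℚ)) := by
    refine Finset.prod_subset htS ?_
    intro x _ hx
    have : t.count x = 0 := by
      rw [Multiset.count_eq_zero]
      intro hmem; exact hx (Multiset.mem_toFinset.2 hmem)
    simp [this]
  rw [hC, zOf_eq (s + t) (le_refl S), zOf_eq s hsS, zOf_eq t htS,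
    ← Finset.prod_mul_distrib, ← Finset.prod_mul_distrib]
  refine Finset.prod_congr rfl ?_
  intro j _
  have hcount : (s + t).count j = s.count j + t.count j := Multiset.count_add j s t
  rw [hcount]
  have hkey := Nat.choose_mul_factorial_mul_factorial
    (show t.count j ≤ s.count j + t.count j from Nat.le_add_left _ _)
  have hsub : s.count j + t.count j - t.count j = s.count j := by omega
  rw [hsub] at hkey
  have : (((s.count j + t.count j).choose (t.count j) : ℚ)) *
      ((t.count j).factorial : ℚ) * ((s.count j).factorial : ℚ)
      = (((s.count j + t.count j).factorial : ℚ)) := by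
    exact_mod_cast congrArg (fun x : ℕ => (x : ℚ)) hkey
  rw [pow_add, ← this]
  ring

lemma zOf_singleton (a : ℕ) : zOf ({a} : Multiset ℕ) = (a : ℚ) := by
  rw [zOf]
  simp only [Bind.bind, Pure.pure, Multiset.instMonad, Multiset.bind_singleton,
    Multiset.map_map, Multiset.map_id', Function.comp_def]
  simp

lemma zOf_cons (a : ℕ) (s : Multiset ℕ) :
    zOf (a ::ₘ s) = ((a : ℚ) * (((a ::ₘ s).count a : ℕ) : ℚ)) * zOf s := by
  have h1 : a ::ₘ s = s + {a} := by
    rw [add_comm, Multiset.singleton_add]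
  rw [h1, zOf_add]
  simp only [Multiset.toFinset_singleton, Finset.prod_singleton, Multiset.count_singleton_self,
    zOf_singleton]
  have h2 : (s + {a}).count a = s.count a + 1 := by
    rw [Multiset.count_add, Multiset.count_singleton_self]
  rw [h2, Nat.choose_one_right]
  push_cast
  ring

lemma zOf_ne_zero {n : ℕ} (π : Nat.Partition n) : zOf π.parts ≠ 0 :=
  ne_of_gt (zOf_pos _ (fun _ hx => π.parts_pos hx))

noncomputable def Hp (m : ℕ) : SymFn := ∑ ν : Nat.Partition m, (zPart ν)⁻¹ • pProd ν

lemma Hp_zero : Hp 0 = 1 := by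
  rw [Hp, Finset.univ_unique, Finset.sum_singleton, zPart_eq, pProd_eq]
  have h : (default : Nat.Partition 0).parts = 0 := Nat.Partition.partition_zero_parts _
  rw [h]
  simp only [pOf, Multiset.map_zero, Multiset.prod_zero]
  rw [show zOf 0 = 1 by
    rw [zOf]
    simp only [Bind.bind, Pure.pure, Multiset.instMonad]
    simp]
  simp

lemma Hp_rec (m : ℕ) :
    ∑ i ∈ Finset.range (m+1), psum (i+1) * Hp (m - i) = ((m : ℚ)+1) • Hp (m+1) := by
  classical
  have hL : ∑ i ∈ Finset.range (m+1), psum (i+1) * Hp (m - i)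
      = ∑ x ∈ (Finset.range (m+1)).sigma
          (fun i => (Finset.univ : Finset (Nat.Partition (m - i)))),
          (zPart x.2)⁻¹ • (psum (x.1+1) * pProd x.2) := by
    rw [Finset.sum_sigma]
    refine Finset.sum_congr rfl fun i _ => ?_
    rw [Hp, Finset.mul_sum]
    refine Finset.sum_congr rfl fun ν _ => ?_
    dsimp only
    exact mul_smul_comm _ _ _
  have hR : ((m : ℚ)+1) • Hp (m+1)
      = ∑ x ∈ (Finset.univ : Finset (Nat.Partition (m+1))).sigma (fun μ => μ.parts.toFinset),
          (((x.2 : ℚ) * ((x.1.parts.count x.2 : ℕ) : ℚ)) / zPart x.1) • pProd x.1 := by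
    rw [Finset.sum_sigma, Hp, Finset.smul_sum]
    refine Finset.sum_congr rfl fun μ _ => ?_
    dsimp only
    rw [← Finset.sum_smul, smul_smul]
    congr 1
    have hsum : ∑ j ∈ μ.parts.toFinset, (μ.parts.count j) * j = m + 1 := by
      have := Finset.sum_multiset_map_count μ.parts (id : ℕ → ℕ)
      simp only [Multiset.map_id', smul_eq_mul, id] at this
      rw [← this, μ.parts_sum]
    have hQ : ((m : ℚ) + 1) = ∑ j ∈ μ.parts.toFinset, ((j : ℚ) * ((μ.parts.count j : ℕ) : ℚ)) := by
      have h2 := congrArg (fun x : ℕ => (x : ℚ)) hsum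
      push_cast at h2
      rw [← h2]
      exact Finset.sum_congr rfl fun j _ => by ring
    rw [hQ, Finset.sum_mul]
    exact Finset.sum_congr rfl fun j _ => by rw [div_eq_mul_inv]
  rw [hL, hR]
  refine Finset.sum_bij
    (fun x hx => ⟨⟨(x.1+1) ::ₘ x.2.parts, by intro i hi; rcases Multiset.mem_cons.1 hi with h | h
                                             · omega
                                             · exact x.2.parts_pos h, by
        have hx1 : x.1 < m + 1 := Finset.mem_range.1 (Finset.mem_sigma.1 hx).1
        rw [Multiset.sum_cons, x.2.parts_sum]; omega⟩, x.1+1⟩)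
    ?_ ?_ ?_ ?_
  · intro a ha
    rw [Finset.mem_sigma]
    exact ⟨Finset.mem_univ _, Multiset.mem_toFinset.2 (Multiset.mem_cons_self _ _)⟩
  · intro a₁ ha₁ a₂ ha₂ h
    obtain ⟨hfst, hsnd⟩ := Sigma.mk.inj_iff.1 h
    have hij : a₁.1 = a₂.1 := by
      have := eq_of_heq hsnd
      omega
    obtain ⟨i₁, ν₁⟩ := a₁
    obtain ⟨i₂, ν₂⟩ := a₂
    simp only at hij
    subst hij
    have hparts : ν₁.parts = ν₂.parts := by
      have := congrArg Nat.Partition.parts hfst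
      simpa only [Multiset.cons_inj_right] using this
    exact congrArg _ (Nat.Partition.ext hparts)
  · rintro ⟨μ, j⟩ hb
    have hjmem : j ∈ μ.parts := Multiset.mem_toFinset.1 (Finset.mem_sigma.1 hb).2
    have hj1 : 1 ≤ j := μ.parts_pos hjmem
    have hsum : j + (μ.parts.erase j).sum = m + 1 := by
      rw [← Multiset.sum_cons, Multiset.cons_erase hjmem, μ.parts_sum]
    have hts : (μ.parts.erase j).sum = m - (j - 1) := by omega
    refine ⟨⟨j - 1, ⟨μ.parts.erase j, fun hi => μ.parts_pos (Multiset.mem_of_mem_erase hi),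
        hts⟩⟩, ?_, ?_⟩
    · rw [Finset.mem_sigma]
      dsimp only
      exact ⟨Finset.mem_range.2 (by omega), Finset.mem_univ _⟩
    · have h1 : j - 1 + 1 = j := by omega
      have hP : (j - 1 + 1) ::ₘ μ.parts.erase j = μ.parts := by
        rw [h1, Multiset.cons_erase hjmem]
      refine Sigma.ext ?_ ?_
      · exact Nat.Partition.ext hP
      · exact heq_of_eq h1
  · rintro ⟨i, ν⟩ ha
    simp only [zPart_eq, pProd_eq]
    have hcnat : 0 < ((i+1) ::ₘ ν.parts).count (i+1) := by
      rw [Multiset.count_cons_self]; omega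
    have hc : ((((i+1) ::ₘ ν.parts).count (i+1) : ℕ) : ℚ) ≠ 0 := by
      exact_mod_cast Nat.pos_iff_ne_zero.1 hcnat
    rw [zOf_cons, pOf_cons]
    have hC : ((i+1 : ℕ) : ℚ) * ((((i+1) ::ₘ ν.parts).count (i+1) : ℕ) : ℚ) ≠ 0 := by
      apply mul_ne_zero
      · exact_mod_cast Nat.succ_ne_zero i
      · exact hc
    rw [div_eq_mul_inv, mul_inv, ← mul_assoc, mul_inv_cancel₀ hC, one_mul]

lemma hsym_eq_Hp (m : ℕ) : hsym m = Hp m := by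
  induction m using Nat.strong_induction_on with
  | _ m ih =>
    match m with
    | 0 => rw [hsym, Hp_zero]
    | (m+1) =>
      rw [hsym]
      have h1 : ∑ i ∈ Finset.range (m+1), psum (i+1) * hsym (m-i)
          = ∑ i ∈ Finset.range (m+1), psum (i+1) * Hp (m-i) :=
        Finset.sum_congr rfl fun i _ => by rw [ih (m - i) (by omega)]
      rw [h1, Hp_rec, smul_smul, inv_mul_cancel₀ (by positivity : ((m:ℚ)+1) ≠ 0), one_smul]

lemma choose_prod_eq_zero {k n : ℕ} (lam : Nat.Partition k) (μ : Nat.Partition n)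
    (h : ¬ lam.parts ≤ μ.parts) :
    (∏ j ∈ lam.parts.toFinset,
      ((Nat.choose (μ.parts.count j) (lam.parts.count j) : ℚ))) = 0 := by
  rw [Multiset.le_iff_count] at h
  push_neg at h
  obtain ⟨j, hj⟩ := h
  have hjmem : j ∈ lam.parts.toFinset :=
    Multiset.mem_toFinset.2 (Multiset.count_pos.1 (by omega))
  refine Finset.prod_eq_zero hjmem ?_
  rw [Nat.choose_eq_zero_of_lt (by omega)]
  norm_num


/-- The Frobenius characteristic of the polynomial character `binom(X, λ)`
(whose value on a permutation of cycle type `μ = 1^{n₁}2^{n₂}⋯` is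
`∏_j binom(n_j, m_j)` for `λ = 1^{m₁}2^{m₂}⋯`) equals
`(p_λ / z_λ)·h_{n-|λ|}` if `n ≥ |λ|`, and `0` if `n < |λ|`. -/
theorem stmt14 (k n : ℕ) (lam : Nat.Partition k) :
    (∑ μ : Nat.Partition n,
      ((∏ j ∈ lam.parts.toFinset,
          ((Nat.choose (μ.parts.count j) (lam.parts.count j) : ℚ))) / zPart μ) • pProd μ)
    = if k ≤ n then (zPart lam)⁻¹ • (pProd lam * hsym (n - k)) else 0 := by
  classical
  by_cases hkn : k ≤ n
  · rw [if_pos hkn]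
    have hfilter : (∑ μ : Nat.Partition n,
        ((∏ j ∈ lam.parts.toFinset,
            ((Nat.choose (μ.parts.count j) (lam.parts.count j) : ℚ))) / zPart μ) • pProd μ)
        = ∑ μ ∈ Finset.univ.filter (fun μ : Nat.Partition n => lam.parts ≤ μ.parts),
          ((∏ j ∈ lam.parts.toFinset,
            ((Nat.choose (μ.parts.count j) (lam.parts.count j) : ℚ))) / zPart μ) • pProd μ := by
      refine (Finset.sum_filter_of_ne ?_).symm
      intro μ _ hne
      by_contra hle
      exact hne (by rw [choose_prod_eq_zero lam μ hle, zero_div, zero_smul])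
    rw [hfilter]
    have hbij : ∑ ν : Nat.Partition (n - k),
        (zPart lam)⁻¹ • ((zPart ν)⁻¹ • (pProd lam * pProd ν))
        = ∑ μ ∈ Finset.univ.filter (fun μ : Nat.Partition n => lam.parts ≤ μ.parts),
          ((∏ j ∈ lam.parts.toFinset,
            ((Nat.choose (μ.parts.count j) (lam.parts.count j) : ℚ))) / zPart μ) • pProd μ := by
      refine Finset.sum_bij
        (fun ν _ => ⟨ν.parts + lam.parts, by
            intro i hi
            rcases Multiset.mem_add.1 hi with h | h
            · exact ν.parts_pos h
            · exact lam.parts_pos h, by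
            rw [Multiset.sum_add, ν.parts_sum, lam.parts_sum]; omega⟩)
        ?_ ?_ ?_ ?_
      · intro ν _
        rw [Finset.mem_filter]
        exact ⟨Finset.mem_univ _, le_add_self⟩
      · intro ν₁ _ ν₂ _ h
        have := congrArg Nat.Partition.parts h
        simp only at this
        exact Nat.Partition.ext (add_right_cancel this)
      · intro μ hμ
        have hle : lam.parts ≤ μ.parts := (Finset.mem_filter.1 hμ).2
        have hadd : μ.parts - lam.parts + lam.parts = μ.parts := tsub_add_cancel_of_le hle
        have hsum : (μ.parts - lam.parts).sum = n - k := by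
          have := congrArg Multiset.sum hadd
          rw [Multiset.sum_add, μ.parts_sum, lam.parts_sum] at this
          omega
        refine ⟨⟨μ.parts - lam.parts, fun hi =>
          μ.parts_pos (Multiset.mem_of_le tsub_le_self hi), hsum⟩, Finset.mem_univ _, ?_⟩
        exact Nat.Partition.ext hadd
      · intro ν _
        simp only [zPart_eq, pProd_eq]
        have hcount : ∀ j, (ν.parts + lam.parts).count j = ν.parts.count j + lam.parts.count j :=
          fun j => Multiset.count_add j _ _
        have hz := zOf_add ν.parts lam.parts
        have hCpos : (∏ j ∈ lam.parts.toFinset,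
            (((ν.parts.count j + lam.parts.count j).choose (lam.parts.count j) : ℚ))) ≠ 0 := by
          refine Finset.prod_ne_zero_iff.2 fun j _ => ?_
          have := Nat.choose_pos (show lam.parts.count j ≤ ν.parts.count j + lam.parts.count j
            from Nat.le_add_left _ _)
          positivity
        have hCeq : (∏ j ∈ lam.parts.toFinset,
            ((Nat.choose ((ν.parts + lam.parts).count j) (lam.parts.count j) : ℚ)))
            = ∏ j ∈ lam.parts.toFinset,
              (((ν.parts.count j + lam.parts.count j).choose (lam.parts.count j) : ℚ)) :=
          Finset.prod_congr rfl fun j _ => by rw [hcount j]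
        rw [hCeq, hz, pOf_add, smul_smul, mul_comm (pOf ν.parts) (pOf lam.parts)]
        congr 1
        have hzν := zOf_ne_zero ν
        have hzlam := zOf_ne_zero lam
        field_simp
    rw [← hbij, hsym_eq_Hp, Hp, Finset.mul_sum, Finset.smul_sum]
    exact Finset.sum_congr rfl fun ν _ => by rw [mul_smul_comm]
  · rw [if_neg hkn]
    refine Finset.sum_eq_zero fun μ _ => ?_
    have hle : ¬ lam.parts ≤ μ.parts := by
      intro hle
      have hadd : μ.parts - lam.parts + lam.parts = μ.parts := tsub_add_cancel_of_le hle
      have := congrArg Multiset.sum hadd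
      rw [Multiset.sum_add, μ.parts_sum, lam.parts_sum] at this
      omega
    rw [choose_prod_eq_zero lam μ hle, zero_div, zero_smul]
end

section
/- For the symmetric-function generating series Ŵ(u) := exp(−Σ_{m≥1} p_m u^m / m) · Π_{ℓ≥1}(1 + (−1)^ℓ p_ℓ)^{a_ℓ(−u)} (with a_ℓ(u) = (1/ℓ)Σ_{d|ℓ}μ(d)u^{ℓ/d}), one has the differential equation ∂Ŵ(u)/∂p_1 = (u·p_1/(1 − p_1))·Ŵ(u), where ∂/∂p_1 is taken coefficient-wise in u, treating symmetric functions as polynomials in the power sums. -/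
open scoped BigOperators

/-- The completed ring of symmetric functions over `ℚ`: formal power series in
the power sums `p_1, p_2, …` (variable `ℓ` stands for `p_ℓ`). -/
abbrev SymC : Type := MvPowerSeries ℕ ℚ

/-- The ambient ring `Λ^[[u]]`. -/
abbrev SymCU : Type := PowerSeries SymC

/-- The power sum `p_n`. -/
noncomputable def pc (n : ℕ) : SymC := MvPowerSeries.X n

/-- Formal exponential of a `u`-power series (intended for series with zero
constant term, where the defining sum is finite in each degree). -/
noncomputable def expS (F : SymCU) : SymCU :=
  PowerSeries.mk fun n =>
    ∑ k ∈ Finset.range (n + 1),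
      ((k.factorial : ℚ)⁻¹) • (PowerSeries.coeff n (F ^ k))

/-- `log (1 + (-1)^ℓ p_ℓ) = ∑_{k ≥ 1} (-1)^{k-1} ((-1)^ℓ p_ℓ)^k / k`,
as an element of the completed ring. -/
noncomputable def logFactor (ℓ : ℕ) : SymC := fun s =>
  if s = Finsupp.single ℓ (s ℓ) ∧ 0 < s ℓ
  then (-1 : ℚ) ^ (s ℓ - 1) * (-1 : ℚ) ^ (ℓ * s ℓ) / (s ℓ)
  else 0

/-- The exponent `a_ℓ(-u) = (1/ℓ)∑_{d ∣ ℓ} μ(d)(-u)^{ℓ/d}`, as a scalar element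
of `Λ^[[u]]`. -/
noncomputable def aNegU (ℓ : ℕ) : SymCU :=
  PowerSeries.mk fun n =>
    if 0 < n ∧ n ∣ ℓ
    then ((((ArithmeticFunction.moebius (ℓ / n) : ℤ) : ℚ) / ℓ) * (-1 : ℚ) ^ n) • (1 : SymC)
    else 0

/-- `log` of the product `Π_{ℓ ≥ 1} (1 + (-1)^ℓ p_ℓ)^{a_ℓ(-u)}`, namely
`∑_{ℓ ≥ 1} a_ℓ(-u)·log(1 + (-1)^ℓ p_ℓ)`, defined coefficientwise (the sum at a
monomial `s` in the `p`'s is supported on `ℓ ∈ supp s`). -/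
noncomputable def logProdPart : SymCU :=
  PowerSeries.mk fun n => (fun s =>
    ∑ ℓ ∈ s.support,
      MvPowerSeries.coeff s
        (PowerSeries.coeff n (aNegU ℓ * PowerSeries.C (logFactor ℓ))) : SymC)

/-- `log (H(u)⁻¹) = -∑_{m ≥ 1} p_m u^m / m`. -/
noncomputable def hInvLog : SymCU :=
  PowerSeries.mk fun m => if 0 < m then (-(m : ℚ)⁻¹) • pc m else 0

/-- `Ŵ(u) = exp(-∑_{m≥1} p_m u^m/m) · Π_{ℓ≥1} (1 + (-1)^ℓ p_ℓ)^{a_ℓ(-u)}`,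
the products and powers interpreted via formal `exp` and `log`. -/
noncomputable def What : SymCU := expS (hInvLog + logProdPart)

/-- The derivation `∂/∂p_1` on the completed ring of symmetric functions. -/
noncomputable def dP1 (f : SymC) : SymC := fun s =>
  ((s 1 : ℚ) + 1) * MvPowerSeries.coeff (s + Finsupp.single 1 1) f

/-- `∂/∂p_1`, applied coefficientwise in `u`. -/
noncomputable def dP1U (F : SymCU) : SymCU :=
  PowerSeries.mk fun n => dP1 (PowerSeries.coeff n F)

/-! ### Auxiliary lemmas -/

noncomputable abbrev ee : ℕ →₀ ℕ := Finsupp.single 1 1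

lemma coeff_eval (f : SymC) (s : ℕ →₀ ℕ) : MvPowerSeries.coeff s f = f s := rfl

lemma key (f g : SymC) (s : ℕ →₀ ℕ) :
    ∑ p ∈ Finset.HasAntidiagonal.antidiagonal (s + ee), ((p.1 1 : ℚ)) * (f p.1 * g p.2)
    = ∑ q ∈ Finset.HasAntidiagonal.antidiagonal s, ((q.1 1 : ℚ) + 1) * (f (q.1 + ee) * g q.2) := by
  rw [← Finset.sum_filter_of_ne (p := fun p : (ℕ →₀ ℕ) × (ℕ →₀ ℕ) => p.1 1 ≠ 0)
    (by intro x _ hx; intro h0; exact hx (by simp [h0]))]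
  refine Finset.sum_nbij' (fun p => (p.1 - ee, p.2)) (fun q => (q.1 + ee, q.2)) ?_ ?_ ?_ ?_ ?_
  · rintro ⟨a, b⟩ hp
    simp only [Finset.mem_filter, Finset.HasAntidiagonal.mem_antidiagonal] at hp ⊢
    obtain ⟨h1, h2⟩ := hp
    have h2' : 1 ≤ a 1 := Nat.pos_of_ne_zero h2
    ext x
    have := DFunLike.congr_fun h1 x
    simp only [Finsupp.add_apply, Finsupp.tsub_apply] at this ⊢
    rcases eq_or_ne x 1 with rfl | hx
    · simp only [Finsupp.single_eq_same] at this ⊢; omega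
    · simp only [Finsupp.single_eq_of_ne hx] at this ⊢; omega
  · rintro ⟨a, b⟩ hq
    simp only [Finset.HasAntidiagonal.mem_antidiagonal] at hq
    simp only [Finset.mem_filter, Finset.HasAntidiagonal.mem_antidiagonal]
    constructor
    · ext x
      have := DFunLike.congr_fun hq x
      simp only [Finsupp.add_apply] at this ⊢
      rcases eq_or_ne x 1 with rfl | hx
      · simp only [Finsupp.single_eq_same] at this ⊢; omega
      · simp only [Finsupp.single_eq_of_ne hx] at this ⊢; omega
    · simp
  · rintro ⟨a, b⟩ hp
    simp only [Finset.mem_filter, Finset.HasAntidiagonal.mem_antidiagonal] at hp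
    have h2 : 1 ≤ a 1 := Nat.pos_of_ne_zero hp.2
    have : ee ≤ a := by
      rw [Finsupp.single_le_iff]; exact h2
    simp [tsub_add_cancel_of_le this]
  · rintro ⟨a, b⟩ _
    simp
  · rintro ⟨a, b⟩ hp
    simp only [Finset.mem_filter, Finset.HasAntidiagonal.mem_antidiagonal] at hp
    have h2 : 1 ≤ a 1 := Nat.pos_of_ne_zero hp.2
    have hle : ee ≤ a := by rw [Finsupp.single_le_iff]; exact h2
    simp only [tsub_add_cancel_of_le hle]
    congr 1
    simp only [Finsupp.tsub_apply, Finsupp.single_eq_same]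
    push_cast [Nat.cast_sub h2]
    ring

lemma swap_sum (t : ℕ →₀ ℕ) (F : (ℕ →₀ ℕ) → (ℕ →₀ ℕ) → ℚ) :
    ∑ p ∈ Finset.HasAntidiagonal.antidiagonal t, F p.1 p.2 = ∑ p ∈ Finset.HasAntidiagonal.antidiagonal t, F p.2 p.1 := by
  conv_lhs => rw [← Finset.HasAntidiagonal.map_swap_antidiagonal]
  rw [Finset.sum_map]
  rfl

lemma coeff_mul' (f g : SymC) (s : ℕ →₀ ℕ) :
    (f * g) s = ∑ p ∈ Finset.HasAntidiagonal.antidiagonal s, f p.1 * g p.2 :=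
  MvPowerSeries.coeff_mul s f g

lemma dP1_mul (f g : SymC) : dP1 (f * g) = dP1 f * g + f * dP1 g := by
  funext s
  show ((s 1 : ℚ) + 1) * MvPowerSeries.coeff (s + ee) (f * g) = (dP1 f * g) s + (f * dP1 g) s
  have h1 : (dP1 f * g) s
      = ∑ q ∈ Finset.HasAntidiagonal.antidiagonal s, ((q.1 1 : ℚ) + 1) * (f (q.1 + ee) * g q.2) := by
    rw [coeff_mul']
    refine Finset.sum_congr rfl fun q _ => ?_
    simp only [dP1, coeff_eval]; ring
  have h2 : (f * dP1 g) s
      = ∑ q ∈ Finset.HasAntidiagonal.antidiagonal s, ((q.1 1 : ℚ) + 1) * (g (q.1 + ee) * f q.2) := by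
    rw [coeff_mul', swap_sum s (fun a b => f a * dP1 g b)]
    refine Finset.sum_congr rfl fun q _ => ?_
    simp only [dP1, coeff_eval]; ring
  rw [h1, h2, ← key, ← key, coeff_eval, coeff_mul', Finset.mul_sum,
    swap_sum (s + ee) (fun a b => ((a 1 : ℚ)) * (g a * f b)), ← Finset.sum_add_distrib]
  refine Finset.sum_congr rfl fun p hp => ?_
  have hm := Finset.HasAntidiagonal.mem_antidiagonal.1 hp
  have h1' := DFunLike.congr_fun hm 1
  simp only [Finsupp.add_apply, Finsupp.single_eq_same] at h1'
  have hq : (s 1 : ℚ) + 1 = (p.1 1 : ℚ) + (p.2 1 : ℚ) := by exact_mod_cast h1'.symm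
  rw [hq]; ring

lemma dP1_add (f g : SymC) : dP1 (f + g) = dP1 f + dP1 g := by
  funext s
  have : (dP1 f + dP1 g) s = dP1 f s + dP1 g s := rfl
  simp only [dP1, this, map_add]; ring

lemma dP1_smul (q : ℚ) (f : SymC) : dP1 (q • f) = q • dP1 f := by
  funext s
  have : (q • dP1 f) s = q * dP1 f s := rfl
  simp only [dP1, this, map_smul, smul_eq_mul]; ring

lemma dP1_zero : dP1 0 = 0 := by
  funext s; simp [dP1]; rfl

lemma dP1_sum {ι : Type*} (t : Finset ι) (f : ι → SymC) :
    dP1 (∑ i ∈ t, f i) = ∑ i ∈ t, dP1 (f i) := by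
  classical
  induction t using Finset.induction_on with
  | empty => simp [dP1_zero]
  | insert _ _ h ih => rw [Finset.sum_insert h, dP1_add, ih, Finset.sum_insert h]

lemma dP1_one : dP1 1 = 0 := by
  funext s
  have hne : s + ee ≠ 0 := by
    intro h
    have := DFunLike.congr_fun h 1
    simp [Finsupp.add_apply] at this
  simp [dP1, MvPowerSeries.coeff_one, hne]; rfl

lemma single_char (s : ℕ →₀ ℕ) :
    s = Finsupp.single 1 (s 1) ↔ ∀ x, x ≠ 1 → s x = 0 := by
  constructor
  · intro h x hx
    conv_lhs => rw [h]
    exact Finsupp.single_eq_of_ne hx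
  · intro h; ext x
    rcases eq_or_ne x 1 with rfl | hx
    · simp
    · simp [Finsupp.single_eq_of_ne hx, h x hx]

noncomputable def geo : SymC := fun s => if s = Finsupp.single 1 (s 1) then 1 else 0

lemma geo_mul : (1 - pc 1) * geo = 1 := by
  have hx : pc 1 * geo = MvPowerSeries.monomial ee 1 * geo := rfl
  funext s
  have hL : ((1 - pc 1) * geo) s = geo s - (pc 1 * geo) s := by
    rw [sub_mul, one_mul]; rfl
  have hmul : (pc 1 * geo) s = if ee ≤ s then geo (s - ee) else 0 := by
    rw [hx, ← coeff_eval (MvPowerSeries.monomial ee 1 * geo) s,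
      MvPowerSeries.coeff_monomial_mul]
    simp [coeff_eval]
  have hone : (1 : SymC) s = if s = 0 then 1 else 0 := by
    rw [← coeff_eval 1 s, MvPowerSeries.coeff_one]
  rw [hL, hmul, hone]
  by_cases hs : s = Finsupp.single 1 (s 1)
  · by_cases hk : s 1 = 0
    · have hs0 : s = 0 := by rw [hs, hk, Finsupp.single_zero]
      have : ¬ ee ≤ s := by
        rw [hs0]; intro h
        have := h 1; simp at this
      simp [geo, hs0, this]
    · have hle : ee ≤ s := by
        rw [Finsupp.single_le_iff]; exact Nat.pos_of_ne_zero hk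
      have hs0 : s ≠ 0 := fun h => hk (by rw [h]; rfl)
      have hsub : s - ee = Finsupp.single 1 ((s - ee) 1) := by
        rw [single_char]
        intro x hxx
        rw [Finsupp.tsub_apply, (single_char s).1 hs x hxx]
        simp [Finsupp.single_eq_of_ne hxx]
      simp only [geo, if_pos hs, if_pos hle, if_pos hsub, if_neg hs0]
      ring
  · have hs0 : s ≠ 0 := by
      intro h; apply hs; rw [h]; simp
    have hsub : ¬ (s - ee = Finsupp.single 1 ((s - ee) 1)) := by
      intro h
      apply hs
      rw [single_char] at h ⊢
      intro x hxx
      have := h x hxx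
      rw [Finsupp.tsub_apply, Finsupp.single_eq_of_ne hxx] at this
      omega
    by_cases hle : ee ≤ s
    · simp only [geo, if_neg hs, if_pos hle, if_neg hsub, if_neg hs0]; ring
    · simp only [geo, if_neg hs, if_neg hle, if_neg hs0]; ring

lemma const_coeff : MvPowerSeries.constantCoeff (1 - pc 1) ≠ 0 := by
  simp [pc]

lemma inv_geo : (1 - pc 1)⁻¹ = geo := by
  rw [MvPowerSeries.inv_eq_iff_mul_eq_one const_coeff, mul_comm]
  exact geo_mul

lemma r_eq : pc 1 * (1 - pc 1)⁻¹ = geo - 1 := by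
  rw [inv_geo]
  linear_combination -geo_mul

lemma coeff_dP1U (F : SymCU) (n : ℕ) :
    PowerSeries.coeff n (dP1U F) = dP1 (PowerSeries.coeff n F) := by
  rw [dP1U, PowerSeries.coeff_mk]

lemma dP1U_mul (F G : SymCU) : dP1U (F * G) = dP1U F * G + F * dP1U G := by
  ext n
  rw [coeff_dP1U]
  rw [PowerSeries.coeff_mul]
  rw [dP1_sum]
  rw [map_add (PowerSeries.coeff n)]
  rw [PowerSeries.coeff_mul]
  rw [PowerSeries.coeff_mul]
  have hterm : ∀ p ∈ Finset.HasAntidiagonal.antidiagonal n,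
      dP1 (PowerSeries.coeff p.1 F * PowerSeries.coeff p.2 G)
        = PowerSeries.coeff p.1 (dP1U F) * PowerSeries.coeff p.2 G
          + PowerSeries.coeff p.1 F * PowerSeries.coeff p.2 (dP1U G) :=
    fun p _ => by rw [dP1_mul, coeff_dP1U, coeff_dP1U]
  rw [Finset.sum_congr rfl hterm, Finset.sum_add_distrib]

lemma dP1U_one : dP1U 1 = 0 := by
  ext n
  rw [coeff_dP1U, PowerSeries.coeff_one]
  rcases eq_or_ne n 0 with rfl | h
  · simp [dP1_one]
  · simp [h, dP1_zero]

lemma dP1U_pow (G : SymCU) (k : ℕ) :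
    dP1U (G ^ (k + 1)) = (k + 1) • (G ^ k * dP1U G) := by
  induction k with
  | zero => simp
  | succ k ih =>
    rw [pow_succ, dP1U_mul, ih, smul_mul_assoc,
      show G ^ k * dP1U G * G = G ^ (k + 1) * dP1U G by ring,
      succ_nsmul (G ^ (k + 1) * dP1U G) (k + 1)]

lemma dP1_pc_one : dP1 (pc 1) = 1 := by
  funext s
  show ((s 1 : ℚ) + 1) * MvPowerSeries.coeff (s + ee) (pc 1) = (1 : SymC) s
  have hone : (1 : SymC) s = if s = 0 then 1 else 0 := by
    rw [← coeff_eval 1 s, MvPowerSeries.coeff_one]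
  rw [pc, MvPowerSeries.coeff_X, hone]
  rcases eq_or_ne s 0 with rfl | hs
  · simp
  · have hcond : ¬ (s + ee = Finsupp.single 1 1) := by
      intro h
      apply hs
      ext x
      have := DFunLike.congr_fun h x
      simp only [Finsupp.add_apply] at this
      simp only [Finsupp.coe_zero, Pi.zero_apply]
      rcases eq_or_ne x 1 with rfl | hx
      · simp only [Finsupp.single_eq_same] at this ⊢; omega
      · simp only [Finsupp.single_eq_of_ne hx] at this ⊢; omega
    rw [if_neg hcond, if_neg hs]
    ring

lemma dP1_pc (n : ℕ) (h : n ≠ 1) : dP1 (pc n) = 0 := by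
  funext s
  show ((s 1 : ℚ) + 1) * MvPowerSeries.coeff (s + ee) (pc n) = (0 : SymC) s
  have hcond : ¬ (s + ee = Finsupp.single n 1) := by
    intro hc
    have := DFunLike.congr_fun hc 1
    simp only [Finsupp.add_apply, Finsupp.single_eq_same,
      Finsupp.single_eq_of_ne (Ne.symm h)] at this
    omega
  rw [pc, MvPowerSeries.coeff_X, if_neg hcond]
  show ((s 1 : ℚ) + 1) * 0 = 0
  ring

lemma dP1_hInv (n : ℕ) :
    dP1 (PowerSeries.coeff n hInvLog) = if n = 1 then -1 else 0 := by
  rw [hInvLog, PowerSeries.coeff_mk]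
  rcases eq_or_ne n 1 with rfl | hn
  · simp only [Nat.lt_irrefl, if_pos Nat.one_pos, if_pos rfl]
    rw [dP1_smul, dP1_pc_one]
    norm_num
  · rw [if_neg hn]
    rcases Nat.eq_zero_or_pos n with rfl | hpos
    · simp [dP1_zero]
    · rw [if_pos hpos, dP1_smul, dP1_pc n hn, smul_zero]

/-- scalar coefficient of `aNegU`. -/
noncomputable def qc (ℓ n : ℕ) : ℚ :=
  if 0 < n ∧ n ∣ ℓ
  then (((ArithmeticFunction.moebius (ℓ / n) : ℤ) : ℚ) / ℓ) * (-1 : ℚ) ^ n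
  else 0

lemma coeff_aNegU (ℓ n : ℕ) :
    PowerSeries.coeff n (aNegU ℓ) = (qc ℓ n) • (1 : SymC) := by
  rw [aNegU, PowerSeries.coeff_mk, qc]
  split_ifs <;> simp

lemma dP1_logProd (n : ℕ) :
    dP1 (PowerSeries.coeff n logProdPart) = if n = 1 then geo else 0 := by
  funext s
  show ((s 1 : ℚ) + 1)
      * MvPowerSeries.coeff (s + ee) (PowerSeries.coeff n logProdPart)
      = _
  have hterm : ∀ ℓ : ℕ,
      MvPowerSeries.coeff (s + ee)
        (PowerSeries.coeff n (aNegU ℓ * PowerSeries.C (logFactor ℓ)))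
      = qc ℓ n * logFactor ℓ (s + ee) := by
    intro ℓ
    rw [PowerSeries.coeff_mul_C, coeff_aNegU, smul_mul_assoc, one_mul, map_smul,
      smul_eq_mul, coeff_eval]
  have hvanish : ∀ ℓ : ℕ, ℓ ≠ 1 → logFactor ℓ (s + ee) = 0 := by
    intro ℓ hℓ
    have hcond : ¬ ((s + ee) = Finsupp.single ℓ ((s + ee) ℓ) ∧ 0 < (s + ee) ℓ) := by
      rintro ⟨h1, -⟩
      have := DFunLike.congr_fun h1 1
      simp only [Finsupp.add_apply, Finsupp.single_eq_same,
        Finsupp.single_eq_of_ne (Ne.symm hℓ)] at this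
      omega
    simp only [logFactor]
    rw [if_neg hcond]
  have hmem : (1 : ℕ) ∈ (s + ee).support := by
    rw [Finsupp.mem_support_iff]
    simp only [Finsupp.add_apply, Finsupp.single_eq_same]
    omega
  have hsum : MvPowerSeries.coeff (s + ee) (PowerSeries.coeff n logProdPart)
      = qc 1 n * logFactor 1 (s + ee) := by
    rw [logProdPart]; erw [PowerSeries.coeff_mk, coeff_eval]
    rw [Finset.sum_eq_single_of_mem 1 hmem
      (fun ℓ _ hℓ => by rw [hterm ℓ, hvanish ℓ hℓ, mul_zero])]
    exact hterm 1
  rw [hsum]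
  rcases eq_or_ne n 1 with rfl | hn
  · have hq : qc 1 1 = -1 := by
      rw [qc, if_pos ⟨Nat.one_pos, dvd_refl 1⟩]
      simp
    rw [if_pos rfl, hq]
    have happ : (s + ee) 1 = s 1 + 1 := by
      simp [Finsupp.add_apply]
    by_cases hs : s = Finsupp.single 1 (s 1)
    · have hcond : (s + ee) = Finsupp.single 1 ((s + ee) 1) ∧ 0 < (s + ee) 1 := by
        constructor
        · rw [single_char]
          intro x hx
          have h0 := (single_char s).1 hs x hx
          simp [Finsupp.add_apply, Finsupp.single_eq_of_ne hx, h0]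
        · rw [happ]; omega
      have : logFactor 1 (s + ee)
          = (-1 : ℚ) ^ ((s + ee) 1 - 1) * (-1 : ℚ) ^ (1 * (s + ee) 1) / ((s + ee) 1) := by
        simp only [logFactor]
        rw [if_pos hcond]
      have hpow : (-1 : ℚ) ^ (s 1) * (-1 : ℚ) ^ (s 1 + 1) = -1 := by
        rw [← pow_add]
        exact Odd.neg_one_pow ⟨s 1, by ring⟩
      have hgeo : geo s = 1 := by rw [geo, if_pos hs]
      rw [this, happ, one_mul, Nat.add_sub_cancel, hgeo, hpow]
      push_cast
      have hne : ((s 1 : ℚ) + 1) ≠ 0 := by positivity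
      field_simp
    · have hcond : ¬ ((s + ee) = Finsupp.single 1 ((s + ee) 1) ∧ 0 < (s + ee) 1) := by
        rintro ⟨h1, -⟩
        apply hs
        rw [single_char] at h1 ⊢
        intro x hx
        have := h1 x hx
        simp only [Finsupp.add_apply, Finsupp.single_eq_of_ne hx] at this
        omega
      have hz : logFactor 1 (s + ee) = 0 := by
        simp only [logFactor]
        rw [if_neg hcond]
      have hgeo : geo s = 0 := by rw [geo, if_neg hs]
      rw [hz, hgeo]
      ring
  · have hq : qc 1 n = 0 := by
      rw [qc]
      rcases Nat.eq_zero_or_pos n with rfl | hpos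
      · rw [if_neg]; rintro ⟨h, -⟩; omega
      · rw [if_neg]; rintro ⟨-, hdvd⟩; exact hn (Nat.dvd_one.1 hdvd)
    rw [if_neg hn, hq]
    show ((s 1 : ℚ) + 1) * (0 * _) = (0 : SymC) s
    show ((s 1 : ℚ) + 1) * (0 * _) = 0
    ring

lemma dP1U_G : dP1U (hInvLog + logProdPart)
    = PowerSeries.X * PowerSeries.C (pc 1 * (1 - pc 1)⁻¹) := by
  refine PowerSeries.ext fun n => ?_
  rw [coeff_dP1U, map_add (PowerSeries.coeff n), dP1_add, dP1_hInv, dP1_logProd, r_eq]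
  rcases n with _ | n
  · rw [PowerSeries.coeff_zero_X_mul]
    norm_num
  · rw [PowerSeries.coeff_succ_X_mul, PowerSeries.coeff_C]
    rcases eq_or_ne n 0 with rfl | h
    · rw [if_pos rfl, if_pos rfl, if_pos rfl]
      ring
    · have h1 : n + 1 ≠ 1 := by omega
      rw [if_neg h1, if_neg h1, if_neg h]
      ring

/-- `∂Ŵ(u)/∂p_1 = (u·p_1/(1 - p_1))·Ŵ(u)`. -/
theorem stmt18 :
    dP1U What = PowerSeries.X * PowerSeries.C (pc 1 * (1 - pc 1)⁻¹) * What := by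
  set r : SymC := pc 1 * (1 - pc 1)⁻¹ with hr
  set G : SymCU := hInvLog + logProdPart with hG
  have hWhat : What = expS G := rfl
  rw [mul_assoc]
  refine PowerSeries.ext fun n => ?_
  rcases n with _ | n
  · rw [coeff_dP1U, PowerSeries.coeff_zero_X_mul]
    have h0 : PowerSeries.coeff 0 What = 1 := by
      rw [hWhat, expS, PowerSeries.coeff_mk]
      simp
    rw [h0, dP1_one]
  · rw [coeff_dP1U, PowerSeries.coeff_succ_X_mul, PowerSeries.coeff_C_mul]
    rw [hWhat, expS, PowerSeries.coeff_mk, PowerSeries.coeff_mk, dP1_sum]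
    have hterm : ∀ k ∈ Finset.range (n + 2),
        dP1 ((k.factorial : ℚ)⁻¹ • PowerSeries.coeff (n + 1) (G ^ k))
          = (k.factorial : ℚ)⁻¹ • PowerSeries.coeff (n + 1) (dP1U (G ^ k)) :=
      fun k _ => by rw [dP1_smul, coeff_dP1U]
    rw [Finset.sum_congr rfl hterm, Finset.sum_range_succ']
    have h0 : (Nat.factorial 0 : ℚ)⁻¹ • PowerSeries.coeff (n + 1) (dP1U (G ^ 0)) = 0 := by
      rw [pow_zero, dP1U_one]
      simp
    rw [h0, add_zero]
    have hstep : ∀ j : ℕ,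
        ((j + 1).factorial : ℚ)⁻¹ • PowerSeries.coeff (n + 1) (dP1U (G ^ (j + 1)))
          = (j.factorial : ℚ)⁻¹ • (r * PowerSeries.coeff n (G ^ j)) := by
      intro j
      rw [dP1U_pow, dP1U_G, ← hr]
      rw [show G ^ j * (PowerSeries.X * PowerSeries.C r)
          = PowerSeries.X * (PowerSeries.C r * G ^ j) by ring]
      rw [map_nsmul, PowerSeries.coeff_succ_X_mul, PowerSeries.coeff_C_mul]
      rw [← Nat.cast_smul_eq_nsmul ℚ, smul_smul]
      congr 1
      rw [Nat.factorial_succ]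
      push_cast
      have h1 : (j.factorial : ℚ) ≠ 0 := Nat.cast_ne_zero.2 (Nat.factorial_ne_zero j)
      have h2 : ((j : ℚ) + 1) ≠ 0 := by positivity
      field_simp
    rw [Finset.sum_congr rfl (fun j _ => hstep j), Finset.mul_sum]
    exact Finset.sum_congr rfl fun j _ => (mul_smul_comm _ _ _).symm
end
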